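/- arXiv:quant-ph/9905042 — 7 statements merged into one kernel-verified Lean document; each statement's English description precedes it below -/
import Mathlib

section
/- If ω is a state on a unital C*-algebra A and B is a subalgebra of the definite algebra D_ω = {A ∈ A : ω(AX) = ω(A)ω(X) for all X ∈ A}, then the restriction ω|_B is a pure state of B. -/
/-!
On `B` the hypothesis makes `ω` multiplicative. For `c ∈ B` and `d = c - ω c • 1` this gives
`ω (star d * d) = ω (star d) * ω d = 0`. If `ω` is a proper convex combination of two states
`φ₁, φ₂` of `B`, positivity forces `φᵢ (star d * d) = 0`, hence `φᵢ d = 0` by the Cauchy–Schwarz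
bound `|φ d|² ≤ φ (star d * d)`, i.e. `φᵢ c = ω c`.
-/

open scoped ComplexOrder
open Complex ComplexConjugate

def stateSpace (R : Type*) [Ring R] [StarRing R] [Algebra ℂ R] : Set (R →ₗ[ℂ] ℂ) :=
  {φ | (∀ b : R, 0 ≤ φ (star b * b)) ∧ φ 1 = 1}

namespace LinearMap

variable {R : Type*} [Ring R] [StarRing R] [Algebra ℂ R] [StarModule ℂ R] {φ : R →ₗ[ℂ] ℂ}

/-- Polarization: `φ (star x * x)` is real at `x = a + 1` and at `x = a + I • 1`. -/
theorem map_star_of_nonneg (hφ : ∀ x : R, 0 ≤ φ (star x * x)) (a : R) :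
    φ (star a) = conj (φ a) := by
  have him : ∀ x : R, (φ (star x * x)).im = 0 := fun x => (nonneg_iff.mp (hφ x)).2.symm
  have him_one : (φ 1).im = 0 := by simpa using him 1
  have h1 : φ (star (a + 1) * (a + 1)) = φ (star a * a) + φ (star a) + φ a + φ 1 := by
    simp only [star_add, star_one, add_mul, mul_add, one_mul, mul_one, map_add]
    ring
  have hI : φ (star (a + I • 1) * (a + I • 1))
      = φ (star a * a) + I * φ (star a) - I * φ a + φ 1 := by
    simp only [star_add, star_smul, star_one, add_mul, mul_add, one_mul, mul_one, smul_mul_assoc,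
      mul_smul_comm, map_add, map_smul, star_def, conj_I, smul_eq_mul]
    linear_combination (-φ 1) * I_sq
  have him1 := him (a + 1)
  have himI := him (a + I • 1)
  rw [h1] at him1
  rw [hI] at himI
  simp only [add_im, sub_im, mul_im, I_re, I_im, him, him_one] at him1 himI
  apply Complex.ext <;> simp only [conj_re, conj_im] <;> linarith

theorem normSq_le_of_mem_stateSpace (hφ : φ ∈ stateSpace R) (a : R) :
    (normSq (φ a) : ℂ) ≤ φ (star a * a) := by
  have hvar : φ (star (a - φ a • 1) * (a - φ a • 1)) = φ (star a * a) - normSq (φ a) := by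
    simp only [star_sub, star_smul, star_one, sub_mul, mul_sub, one_mul, mul_one, smul_mul_assoc,
      mul_smul_comm, map_sub, map_smul, smul_eq_mul, hφ.2, map_star_of_nonneg hφ.1, star_def]
    rw [← mul_conj]
    ring
  have := hφ.1 (a - φ a • 1)
  rwa [hvar, sub_nonneg] at this

theorem eq_zero_of_apply_star_mul_self_eq_zero (hφ : φ ∈ stateSpace R) {a : R}
    (ha : φ (star a * a) = 0) : φ a = 0 := by
  have := normSq_le_of_mem_stateSpace hφ a
  rw [ha] at this
  exact normSq_eq_zero.mp (le_antisymm (by exact_mod_cast this) (normSq_nonneg _))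

theorem apply_eq_zero_of_mem_openSegment {M : Type*} [AddCommGroup M] [Module ℂ M]
    {ψ φ₁ φ₂ : M →ₗ[ℂ] ℂ} (hψ : ψ ∈ openSegment ℝ φ₁ φ₂) {x : M} (hx : ψ x = 0)
    (h₁ : 0 ≤ φ₁ x) (h₂ : 0 ≤ φ₂ x) : φ₁ x = 0 ∧ φ₂ x = 0 := by
  obtain ⟨s, t, hs, ht, -, rfl⟩ := hψ
  have hsum : s • φ₁ x + t • φ₂ x = 0 := hx
  obtain ⟨hs₁, ht₂⟩ :=
    (add_eq_zero_iff_of_nonneg (smul_nonneg hs.le h₁) (smul_nonneg ht.le h₂)).mp hsum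
  exact ⟨(smul_eq_zero.mp hs₁).resolve_left hs.ne', (smul_eq_zero.mp ht₂).resolve_left ht.ne'⟩

theorem mem_extremePoints_stateSpace_of_map_mul {ψ : R →ₗ[ℂ] ℂ} (hψ : ψ ∈ stateSpace R)
    (hmul : ∀ a b : R, ψ (a * b) = ψ a * ψ b) : ψ ∈ Set.extremePoints ℝ (stateSpace R) := by
  refine mem_extremePoints.mpr ⟨hψ, fun φ₁ hφ₁ φ₂ hφ₂ hseg => ?_⟩
  suffices h : ∀ c : R, φ₁ c = ψ c ∧ φ₂ c = ψ c from
    ⟨ext fun c => (h c).1, ext fun c => (h c).2⟩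
  intro c
  set d := c - ψ c • 1
  have hψd : ψ d = 0 := by simp [d, hψ.2]
  have hψdd : ψ (star d * d) = 0 := by rw [hmul, hψd, mul_zero]
  obtain ⟨h₁, h₂⟩ := apply_eq_zero_of_mem_openSegment hseg hψdd (hφ₁.1 d) (hφ₂.1 d)
  have e₁ := eq_zero_of_apply_star_mul_self_eq_zero hφ₁ h₁
  have e₂ := eq_zero_of_apply_star_mul_self_eq_zero hφ₂ h₂
  simp only [d, map_sub, map_smul, hφ₁.2, hφ₂.2, smul_eq_mul, mul_one, sub_eq_zero] at e₁ e₂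
  exact ⟨e₁, e₂⟩

end LinearMap

theorem stmt_0_general {A : Type*} [NormedRing A] [StarRing A]
    [NormedAlgebra ℂ A] [StarModule ℂ A]
    (ω : A →ₗ[ℂ] ℂ) (hpos : ∀ a : A, 0 ≤ ω (star a * a)) (hone : ω 1 = 1)
    (B : StarSubalgebra ℂ A)
    (hB : ∀ b ∈ B, ∀ x : A, ω (b * x) = ω b * ω x) :
    (ω ∘ₗ B.subtype.toAlgHom.toLinearMap) ∈
      Set.extremePoints ℝ
        {φ : B →ₗ[ℂ] ℂ | (∀ b : B, 0 ≤ φ (star b * b)) ∧ φ 1 = 1} :=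
  LinearMap.mem_extremePoints_stateSpace_of_map_mul ⟨fun b => hpos b, hone⟩
    fun a b => hB a a.2 b

/-- If ω is a state on a unital C*-algebra A and B is a subalgebra of the definite algebra
`D_ω = {A ∈ A : ω(AX) = ω(A)ω(X) for all X}`, then ω restricted to B is a pure state of B,
i.e. an extreme point of the state space of B. -/
theorem stmt_0 {A : Type*} [NormedRing A] [StarRing A] [CStarRing A]
    [NormedAlgebra ℂ A] [StarModule ℂ A] [CompleteSpace A]
    (ω : A →ₗ[ℂ] ℂ) (hpos : ∀ a : A, 0 ≤ ω (star a * a)) (hone : ω 1 = 1)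
    (B : StarSubalgebra ℂ A)
    (hB : ∀ b ∈ B, ∀ x : A, ω (b * x) = ω b * ω x) :
    (ω ∘ₗ B.subtype.toAlgHom.toLinearMap) ∈
      Set.extremePoints ℝ
        {φ : B →ₗ[ℂ] ℂ | (∀ b : B, 0 ≤ φ (star b * b)) ∧ φ 1 = 1} :=
  stmt_0_general ω hpos hone B hB
end

section
/- If ω is a state on a unital C*-algebra A and A ∈ D_ω (i.e. ω(AX)=ω(A)ω(X) for all X ∈ A), then ω(A) lies in the spectrum of A. -/
open scoped ComplexOrder

/-- If ω is a state on a unital C*-algebra A and a ∈ D_ω (the definite algebra of ω,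
i.e. ω(a·x) = ω(a)·ω(x) for all x), then ω(a) lies in the spectrum of a. -/
theorem stmt_1 {A : Type*} [NormedRing A] [StarRing A] [CStarRing A]
    [NormedAlgebra ℂ A] [StarModule ℂ A] [CompleteSpace A]
    (ω : A →ₗ[ℂ] ℂ) (hpos : ∀ a : A, 0 ≤ ω (star a * a)) (hone : ω 1 = 1)
    (a : A) (ha : ∀ x : A, ω (a * x) = ω a * ω x) :
    ω a ∈ spectrum ℂ a := by
  by_contra h
  rw [spectrum.notMem_iff] at h
  obtain ⟨u, hu⟩ := h
  have h1 : (algebraMap ℂ A (ω a) - a) * ↑u⁻¹ = 1 := by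
    rw [← hu]; exact u.mul_inv
  have h2 : ω ((algebraMap ℂ A (ω a) - a) * ↑u⁻¹) = 0 := by
    rw [sub_mul, map_sub, ha, Algebra.algebraMap_eq_smul_one, smul_mul_assoc,
      one_mul, map_smul, smul_eq_mul, sub_self]
  rw [h1, hone] at h2
  exact one_ne_zero h2
end

section
/- A unital C*-algebra B admits a dispersion-free state factorization (i.e. every state on B that is a barycenter of dispersion-free states) only if all commutators are annihilated: if ρ is a state on B that is a mixture (integral) of dispersion-free states, then ρ([A,B]*[A,B]) = 0 for all A, B ∈ B. -/
open scoped ComplexOrder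
open MeasureTheory

theorem LinearMap.map_sub_mul_comm_eq_zero {R A S : Type*} [CommSemiring R] [Ring A] [CommRing S]
    [Module R A] [Module R S] (f : A →ₗ[R] S) (hf : ∀ a b, f (a * b) = f a * f b) (a b : A) :
    f (a * b - b * a) = 0 := by
  rw [map_sub, hf, hf, mul_comm, sub_self]

theorem LinearMap.map_mul_commutator_eq_zero {R A S : Type*} [CommSemiring R] [Ring A]
    [CommRing S] [Module R A] [Module R S] (f : A →ₗ[R] S) (hf : ∀ a b, f (a * b) = f a * f b)
    (x a b : A) : f (x * (a * b - b * a)) = 0 := by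
  rw [hf, f.map_sub_mul_comm_eq_zero hf, mul_zero]

theorem stmt_3_general {B : Type*} [NormedRing B] [StarRing B]
    [NormedAlgebra ℂ B]
    (ρ : B →ₗ[ℂ] ℂ)
    {Ω : Type*} [MeasurableSpace Ω] (μ : Measure Ω)
    (ωs : Ω → B →ₗ[ℂ] ℂ)
    (hmult : ∀ s : Ω, ∀ a b : B, ωs s (a * b) = ωs s a * ωs s b)
    (hmix : ∀ b : B, ρ b = ∫ s, ωs s b ∂μ) :
    ∀ a b : B, ρ (star (a * b - b * a) * (a * b - b * a)) = 0 := by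
  intro a b
  have hvanish : ∀ s, ωs s (star (a * b - b * a) * (a * b - b * a)) = 0 := fun s =>
    (ωs s).map_mul_commutator_eq_zero (hmult s) _ a b
  simp only [hmix, hvanish, integral_zero]

/-- If a state ρ on a unital C*-algebra B is a mixture (integral over a probability
measure) of dispersion-free (multiplicative) states, then ρ annihilates all
commutators: ρ([A,B]*[A,B]) = 0 for all A, B. -/
theorem stmt_3 {B : Type*} [NormedRing B] [StarRing B] [CStarRing B]
    [NormedAlgebra ℂ B] [StarModule ℂ B] [CompleteSpace B]
    (ρ : B →ₗ[ℂ] ℂ) (hρpos : ∀ b : B, 0 ≤ ρ (star b * b)) (hρone : ρ 1 = 1)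
    {Ω : Type*} [MeasurableSpace Ω] (μ : Measure Ω) [IsProbabilityMeasure μ]
    (ωs : Ω → B →ₗ[ℂ] ℂ)
    (hpos : ∀ s : Ω, ∀ b : B, 0 ≤ ωs s (star b * b))
    (hone : ∀ s : Ω, ωs s 1 = 1)
    (hmult : ∀ s : Ω, ∀ a b : B, ωs s (a * b) = ωs s a * ωs s b)
    (hmix : ∀ b : B, ρ b = ∫ s, ωs s b ∂μ) :
    ∀ a b : B, ρ (star (a * b - b * a) * (a * b - b * a)) = 0 :=
  stmt_3_general ρ μ ωs hmult hmix
end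

section
/- If B is a unital C*-algebra, ρ a faithful state on B, and ρ is a mixture of dispersion-free states of B, then B is abelian. -/
open scoped ComplexOrder
open MeasureTheory

/-! A character kills every commutator `c = a * b - b * a`, hence also `star c * c`; integrating,
the mixture `ρ` kills `star c * c` as well, and faithfulness of `ρ` forces `c = 0`. -/

lemma map_mul_sub_mul_comm_eq_zero {F A S : Type*} [Ring A] [CommRing S] [FunLike F A S]
    [AddMonoidHomClass F A S] (f : F) (hf : ∀ a b : A, f (a * b) = f a * f b) (a b : A) :
    f (a * b - b * a) = 0 := by
  rw [map_sub, hf, hf, mul_comm, sub_self]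

lemma map_star_mul_self_mul_sub_mul_comm_eq_zero {F A S : Type*} [Ring A] [StarRing A]
    [CommRing S] [FunLike F A S] [AddMonoidHomClass F A S] (f : F)
    (hf : ∀ a b : A, f (a * b) = f a * f b) (a b : A) :
    f (star (a * b - b * a) * (a * b - b * a)) = 0 := by
  rw [hf, map_mul_sub_mul_comm_eq_zero f hf, mul_zero]

theorem stmt_6_general {B : Type*} [NormedRing B] [StarRing B]
    [NormedAlgebra ℂ B]
    (ρ : B →ₗ[ℂ] ℂ)
    (hfaithful : ∀ b : B, ρ (star b * b) = 0 → b = 0)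
    {Ω : Type*} [MeasurableSpace Ω] (μ : Measure Ω)
    (ωs : Ω → B →ₗ[ℂ] ℂ)
    (hmult : ∀ s : Ω, ∀ a b : B, ωs s (a * b) = ωs s a * ωs s b)
    (hmix : ∀ b : B, ρ b = ∫ s, ωs s b ∂μ) :
    ∀ a b : B, a * b = b * a := by
  intro a b
  refine sub_eq_zero.mp (hfaithful _ ?_)
  simp only [hmix, fun s ↦ map_star_mul_self_mul_sub_mul_comm_eq_zero (ωs s) (hmult s) a b,
    integral_zero]

/-- If ρ is a faithful state on a unital C*-algebra B and ρ is a mixture of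
dispersion-free (multiplicative) states of B, then B is abelian. -/
theorem stmt_6 {B : Type*} [NormedRing B] [StarRing B] [CStarRing B]
    [NormedAlgebra ℂ B] [StarModule ℂ B] [CompleteSpace B]
    (ρ : B →ₗ[ℂ] ℂ) (hρpos : ∀ b : B, 0 ≤ ρ (star b * b)) (hρone : ρ 1 = 1)
    (hfaithful : ∀ b : B, ρ (star b * b) = 0 → b = 0)
    {Ω : Type*} [MeasurableSpace Ω] (μ : Measure Ω) [IsProbabilityMeasure μ]
    (ωs : Ω → B →ₗ[ℂ] ℂ)
    (hpos : ∀ s : Ω, ∀ b : B, 0 ≤ ωs s (star b * b))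
    (hone : ∀ s : Ω, ωs s 1 = 1)
    (hmult : ∀ s : Ω, ∀ a b : B, ωs s (a * b) = ωs s a * ωs s b)
    (hmix : ∀ b : B, ρ b = ∫ s, ωs s b ∂μ) :
    ∀ a b : B, a * b = b * a :=
  stmt_6_general ρ hfaithful μ ωs hmult hmix
end

section
/- Let B be a unital C*-subalgebra of B(H) and v a unit vector in H. If ABv = BAv for all A, B ∈ B, then ABx = BAx for all A, B ∈ B and all x in the closed subspace [Bv] = closure(span{Bv : B ∈ B}). -/
/-- The closed linear span of the orbit of a vector under a set of operators. -/
noncomputable def orbitClosure {H : Type*} [NormedAddCommGroup H] [InnerProductSpace ℂ H]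
    [CompleteSpace H] (B : StarSubalgebra ℂ (H →L[ℂ] H)) (v : H) : Submodule ℂ H :=
  (Submodule.span ℂ ((fun b : H →L[ℂ] H => b v) '' (B : Set (H →L[ℂ] H)))).topologicalClosure

theorem apply_apply_comm_of_mem_orbit {R M S : Type*} [Semiring R] [TopologicalSpace M]
    [AddCommMonoid M] [Module R M] [SetLike S (M →L[R] M)] [MulMemClass S (M →L[R] M)]
    {A : S} {v : M} (hcomm : ∀ a ∈ A, ∀ b ∈ A, a (b v) = b (a v))
    {a b c : M →L[R] M} (ha : a ∈ A) (hb : b ∈ A) (hc : c ∈ A) :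
    a (b (c v)) = b (a (c v)) :=
  calc a (b (c v)) = (a * b) (c v) := rfl
    _ = c ((a * b) v) := hcomm _ (mul_mem ha hb) _ hc
    _ = c ((b * a) v) := congrArg c (hcomm _ ha _ hb)
    _ = (b * a) (c v) := (hcomm _ (mul_mem hb ha) _ hc).symm
    _ = b (a (c v)) := rfl

/-- If B is a unital C*-subalgebra of B(H), v ∈ H, and ABv = BAv for all A, B ∈ B,
then ABx = BAx for all A, B ∈ B and all x in the closed subspace [Bv]. -/
theorem stmt_8 {H : Type*} [NormedAddCommGroup H] [InnerProductSpace ℂ H] [CompleteSpace H]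
    (B : StarSubalgebra ℂ (H →L[ℂ] H)) (v : H)
    (hbeable : ∀ a ∈ B, ∀ b ∈ B, a (b v) = b (a v)) :
    ∀ a ∈ B, ∀ b ∈ B, ∀ x ∈ orbitClosure B v, a (b x) = b (a x) := by
  intro a ha b hb x hx
  have hOrbit : Set.EqOn (a ∘L b) (b ∘L a) ((fun c : H →L[ℂ] H => c v) '' B) := by
    rintro _ ⟨c, hc, rfl⟩
    exact apply_apply_comm_of_mem_orbit hbeable ha hb hc
  rw [orbitClosure, ← SetLike.mem_coe, Submodule.topologicalClosure_coe] at hx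
  exact ContinuousLinearMap.eqOn_closure_span hOrbit hx
end

section
/- Let Q be a projection in B(H) and V a von Neumann algebra on H. If [UQU*, Q] = 0 for every unitary U ∈ V', then Q ∈ V. -/
/-!
For self-adjoint `h` in `V'`, the unitaries `u t = exp (i t h)` lie in `V'` and tend to `1` as
`t → 0`, so the projections `u t Q (u t)*` tend to `Q`. They commute with `Q` by hypothesis, and
commuting idempotents at distance `< 1` coincide; hence `u t` commutes with `Q` for small `t`, and
differentiating at `t = 0` gives `[h, Q] = 0`. Every element of `V'` is a combination of
self-adjoint ones, so `Q ∈ V'' = V`.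
-/

open NormedSpace Filter Topology

theorem IsIdempotentElem.mul_eq_left_of_norm_sub_lt_one {A : Type*} [NormedRing A] {p q : A}
    (hp : IsIdempotentElem p) (hq : IsIdempotentElem q) (hpq : Commute p q)
    (hnorm : ‖p - q‖ < 1) : p * q = p := by
  -- `r := p - p q` is a fixed point of left multiplication by `p - q`, a strict contraction.
  have hfix : (p - q) * (p - p * q) = p - p * q := by
    calc (p - q) * (p - p * q) = p * p - p * p * q - q * p + q * p * q := by noncomm_ring
      _ = p - p * q - p * q + p * (q * q) := by rw [hp.eq, hpq.symm.eq, mul_assoc]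
      _ = p - p * q := by rw [hq.eq]; abel
  have hr : p - p * q = 0 := by
    by_contra hne
    have hle : ‖p - p * q‖ ≤ ‖p - q‖ * ‖p - p * q‖ :=
      calc ‖p - p * q‖ = ‖(p - q) * (p - p * q)‖ := by rw [hfix]
        _ ≤ ‖p - q‖ * ‖p - p * q‖ := norm_mul_le _ _
    nlinarith [norm_pos_iff.mpr hne]
  exact (sub_eq_zero.mp hr).symm

theorem IsIdempotentElem.eq_of_commute_of_norm_sub_lt_one {A : Type*} [NormedRing A] {p q : A}
    (hp : IsIdempotentElem p) (hq : IsIdempotentElem q) (hpq : Commute p q)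
    (hnorm : ‖p - q‖ < 1) : p = q := by
  have hqp : q * p = q :=
    hq.mul_eq_left_of_norm_sub_lt_one hp hpq.symm (norm_sub_rev p q ▸ hnorm)
  rw [← hp.mul_eq_left_of_norm_sub_lt_one hq hpq hnorm, hpq.eq, hqp]

theorem commute_of_mem_unitary_of_mul_mul_star_eq {A : Type*} [Monoid A] [StarMul A] {u q : A}
    (hu : u ∈ unitary A) (h : u * q * star u = q) : Commute u q := by
  calc u * q = u * q * (star u * u) := by rw [Unitary.star_mul_self_of_mem hu, mul_one]
    _ = q * u := by rw [← mul_assoc, h]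

theorem eventually_commute_of_commute_conj {X A : Type*} [TopologicalSpace X] [NormedRing A]
    [StarRing A] [ContinuousStar A] {u : X → A} {x₀ : X} {q : A} (hcont : ContinuousAt u x₀)
    (hu₀ : u x₀ = 1) (hu : ∀ x, u x ∈ unitary A) (hq : IsIdempotentElem q)
    (hcomm : ∀ x, Commute (u x * q * star (u x)) q) : ∀ᶠ x in 𝓝 x₀, Commute (u x) q := by
  have hlim : Tendsto (fun x => u x * q * star (u x)) (𝓝 x₀) (𝓝 q) := by
    have hc : ContinuousAt (fun x => u x * q * star (u x)) x₀ :=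
      (hcont.mul continuousAt_const).mul hcont.star
    simpa [hu₀] using hc.tendsto
  filter_upwards [(tendsto_iff_norm_sub_tendsto_zero.mp hlim).eventually_lt_const one_pos]
    with x hx
  refine commute_of_mem_unitary_of_mul_mul_star_eq (hu x) ?_
  have hidem : IsIdempotentElem (u x * q * star (u x)) := by
    simp only [IsIdempotentElem, mul_assoc, ← mul_assoc (star (u x)),
      Unitary.star_mul_self_of_mem (hu x), one_mul]
    rw [← mul_assoc q q, hq.eq]
  exact hidem.eq_of_commute_of_norm_sub_lt_one hq (hcomm x) hx

theorem commute_of_eventually_commute_exp_smul {𝕂 A : Type*} [RCLike 𝕂] [NormedRing A]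
    [NormedAlgebra 𝕂 A] [CompleteSpace A] {a q : A}
    (h : ∀ᶠ t in 𝓝 (0 : 𝕂), Commute (exp (t • a)) q) : Commute a q := by
  have hexp : HasDerivAt (fun t : 𝕂 => exp (t • a)) a 0 := by
    simpa using hasDerivAt_exp_smul_const' (𝕂 := 𝕂) a 0
  have hleft : HasDerivAt (fun t : 𝕂 => q * exp (t • a)) (a * q) 0 :=
    (hexp.mul_const q).congr_of_eventuallyEq (h.mono fun t ht => ht.symm.eq)
  exact hleft.unique (hexp.const_mul q)

theorem StarSubalgebra.commute_of_forall_isSelfAdjoint {A : Type*} [Ring A] [StarRing A]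
    [Algebra ℂ A] [StarModule ℂ A] (S : StarSubalgebra ℂ A) {x : A}
    (h : ∀ a ∈ S, IsSelfAdjoint a → Commute a x) {a : A} (ha : a ∈ S) : Commute a x := by
  have hre : (realPart a : A) ∈ S := by
    rw [realPart_apply_coe, ← Complex.coe_smul]
    exact S.smul_mem (add_mem ha (star_mem ha)) _
  have him : (imaginaryPart a : A) ∈ S := by
    rw [imaginaryPart_apply_coe, ← Complex.coe_smul]
    exact S.smul_mem (S.smul_mem (sub_mem ha (star_mem ha)) _) _
  rw [← realPart_add_I_smul_imaginaryPart a]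
  exact (h _ hre (realPart a).prop).add_left
    ((h _ him (imaginaryPart a).prop).smul_left Complex.I)

theorem VonNeumannAlgebra.exp_mem_commutant {H : Type*} [NormedAddCommGroup H]
    [InnerProductSpace ℂ H] [CompleteSpace H] {S : VonNeumannAlgebra H} {a : H →L[ℂ] H}
    (ha : a ∈ S.commutant) : exp a ∈ S.commutant :=
  mem_commutant_iff.mpr fun g hg => (Commute.exp_right (mem_commutant_iff.mp ha g hg)).eq

theorem stmt_15_general {H : Type*} [NormedAddCommGroup H] [InnerProductSpace ℂ H] [CompleteSpace H]
    (V : VonNeumannAlgebra H)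
    (Q : H →L[ℂ] H) (hQidem : IsIdempotentElem Q)
    (hcomm : ∀ U : H →L[ℂ] H, U ∈ unitary (H →L[ℂ] H) → U ∈ V.commutant →
      Commute (U * Q * star U) Q) :
    Q ∈ V := by
  rw [← V.commutant_commutant, VonNeumannAlgebra.mem_commutant_iff]
  refine fun T hT => (V.commutant.toStarSubalgebra.commute_of_forall_isSelfAdjoint
    (fun h hh hsa => ?_) hT).eq
  let u : ℝ → H →L[ℂ] H := fun t =>
    selfAdjoint.expUnitary ⟨t • h, (IsSelfAdjoint.all t).smul hsa⟩
  have hu_exp : ∀ t : ℝ, u t = exp (t • Complex.I • h) := fun t => by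
    simp only [u, selfAdjoint.expUnitary_coe, smul_comm (t : ℝ) Complex.I]
  have hu_cont : Continuous u := continuous_subtype_val.comp
    (selfAdjoint.continuous_expUnitary.comp ((continuous_id.smul continuous_const).subtype_mk _))
  have hu : ∀ᶠ t in 𝓝 (0 : ℝ), Commute (u t) Q := by
    refine eventually_commute_of_commute_conj hu_cont.continuousAt (by simp [u])
      (fun t => (selfAdjoint.expUnitary _).prop) hQidem
      fun t => hcomm _ (selfAdjoint.expUnitary _).prop ?_
    rw [hu_exp]
    exact VonNeumannAlgebra.exp_mem_commutant (V.commutant.smul_mem (V.commutant.smul_mem hh _) _)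
  have hIh : Commute (Complex.I • h) Q :=
    commute_of_eventually_commute_exp_smul (hu.mono fun t ht => hu_exp t ▸ ht)
  exact (Commute.smul_left_iff₀ Complex.I_ne_zero).mp hIh

/-- Let Q be a projection in B(H) and V a von Neumann algebra on H.  If UQU* commutes
with Q for every unitary U in the commutant V', then Q ∈ V. -/
theorem stmt_15 {H : Type*} [NormedAddCommGroup H] [InnerProductSpace ℂ H] [CompleteSpace H]
    (V : VonNeumannAlgebra H)
    (Q : H →L[ℂ] H) (hQidem : IsIdempotentElem Q) (hQsa : IsSelfAdjoint Q)
    (hcomm : ∀ U : H →L[ℂ] H, U ∈ unitary (H →L[ℂ] H) → U ∈ V.commutant →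
      Commute (U * Q * star U) Q) :
    Q ∈ V :=
  stmt_15_general V Q hQidem hcomm
end

section
/- Let A, B be self-adjoint operators on H whose unitary groups satisfy the Weyl commutation relation e^{isA}e^{itB} = e^{±ist}e^{itB}e^{isA} for all s,t ∈ ℝ. If ρ is a state of B(H) whose restriction to the von Neumann algebra generated by A is dispersion-free (multiplicative), then ρ(e^{itB}) = 0 for all t ≠ 0. -/
/-!
For a state `f` and a unitary `u` with `‖f u‖ = 1`, the element `u - f u • 1` is null for the
GNS semi-inner product `⟪a, b⟫ = f (star a * b)`, so Cauchy–Schwarz gives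
`f (y * u) = f y * f u = f (u * y)` for every `y`. Taking `s` with `ε s t = π`, the Weyl relation
says that `U s` anticommutes with `W t`, whence `2 f (U s) f (W t) = 0` with `f (U s) ≠ 0`.
-/

open scoped ComplexOrder

namespace PositiveLinearMap

def ofStarMulSelfNonneg {R E₁ E₂ : Type*} [Semiring R] [NonUnitalRing E₁] [PartialOrder E₁]
    [StarRing E₁] [StarOrderedRing E₁] [Module R E₁] [AddCommGroup E₂] [PartialOrder E₂]
    [IsOrderedAddMonoid E₂] [Module R E₂] (f : E₁ →ₗ[R] E₂) (hf : ∀ x, 0 ≤ f (star x * x)) :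
    E₁ →ₚ[R] E₂ :=
  mk₀ f fun _ hx => by
    refine AddSubmonoid.closure_induction ?_ ?_ ?_ (StarOrderedRing.nonneg_iff.mp hx)
    · rintro _ ⟨y, rfl⟩
      exact hf y
    · rw [map_zero]
    · intro _ _ _ _ h₁ h₂
      rw [map_add]
      exact add_nonneg h₁ h₂

variable {A : Type*} [CStarAlgebra A] [PartialOrder A] [StarOrderedRing A] (f : A →ₚ[ℂ] ℂ)

theorem apply_mul_eq_zero_of_apply_star_mul_self_eq_zero {x : A} (hx : f (star x * x) = 0)
    (y : A) : f (y * x) = 0 := by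
  have hnorm : ‖f.toPreGNS x‖ = 0 := by
    have := f.preGNS_norm_sq (f.toPreGNS x)
    simp only [ofPreGNS_toPreGNS, hx] at this
    exact_mod_cast pow_eq_zero_iff (n := 2) two_ne_zero |>.mp this
  have := norm_inner_le_norm (𝕜 := ℂ) (f.toPreGNS (star y)) (f.toPreGNS x)
  rw [hnorm, mul_zero, preGNS_inner_def] at this
  simpa using this

variable {f}

theorem norm_apply_eq_one_of_apply_mul_star (hf : f 1 = 1) {u : A} (hu : u ∈ unitary A)
    (h : f (u * star u) = f u * f (star u)) : ‖f u‖ = 1 := by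
  rw [Unitary.mul_star_self_of_mem hu, hf, map_star, Complex.star_def, Complex.mul_conj] at h
  rw [← pow_eq_one_iff_of_nonneg (norm_nonneg _) two_ne_zero, ← Complex.normSq_eq_norm_sq]
  exact_mod_cast h.symm

theorem apply_mul_unitary (hf : f 1 = 1) {u : A} (hu : u ∈ unitary A) (hfu : ‖f u‖ = 1)
    (y : A) : f (y * u) = f y * f u := by
  have hc : star (f u) * f u = 1 := by
    rw [Complex.star_def, mul_comm, Complex.mul_conj, Complex.normSq_eq_norm_sq, hfu]; simp
  have hexpand : star (u - f u • 1) * (u - f u • 1)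
      = 1 - f u • star u - star (f u) • u + (star (f u) * f u) • 1 := by
    simp only [star_sub, star_smul, star_one, sub_mul, mul_sub, smul_mul_assoc, mul_smul_comm,
      one_mul, mul_one, Unitary.star_mul_self_of_mem hu]
    module
  have hnull : f (star (u - f u • 1) * (u - f u • 1)) = 0 := by
    rw [hexpand]
    simp only [map_add, map_sub, map_smul, map_star, hf, hc, smul_eq_mul, mul_one]
    linear_combination (-1 : ℂ) * hc
  have := f.apply_mul_eq_zero_of_apply_star_mul_self_eq_zero hnull y
  rw [mul_sub, mul_smul_comm, mul_one, map_sub, map_smul, smul_eq_mul, sub_eq_zero] at this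
  rw [this, mul_comm]

theorem apply_unitary_mul (hf : f 1 = 1) {u : A} (hu : u ∈ unitary A) (hfu : ‖f u‖ = 1)
    (y : A) : f (u * y) = f u * f y := by
  have hfu' : ‖f (star u)‖ = 1 := by rw [map_star, norm_star, hfu]
  have := apply_mul_unitary hf (Unitary.star_mem hu) hfu' (star y)
  rw [← star_mul, map_star, map_star, map_star, ← star_mul] at this
  exact star_injective this

theorem apply_eq_zero_of_unitary_mul_eq_neg (hf : f 1 = 1) {u : A} (hu : u ∈ unitary A)
    (hfu : ‖f u‖ = 1) {w : A} (huw : u * w = -(w * u)) : f w = 0 := by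
  have h := congrArg f huw
  rw [map_neg, apply_unitary_mul hf hu hfu, apply_mul_unitary hf hu hfu] at h
  have hc : f u ≠ 0 := norm_ne_zero_iff.mp (hfu ▸ one_ne_zero)
  have : 2 * f u * f w = 0 := by linear_combination h
  simpa [hc] using this

end PositiveLinearMap

theorem stmt_16_general {H : Type*} [NormedAddCommGroup H] [InnerProductSpace ℂ H] [CompleteSpace H]
    (U W : ℝ → (H →L[ℂ] H))
    (hUu : ∀ s, U s ∈ unitary (H →L[ℂ] H))
    (hUstar : ∀ s, star (U s) = U (-s))
    (ε : ℝ) (hε : ε = 1 ∨ ε = -1)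
    (hWeyl : ∀ s t, U s * W t = Complex.exp (ε * s * t * Complex.I) • (W t * U s))
    (ρ : (H →L[ℂ] H) →ₗ[ℂ] ℂ)
    (hpos : ∀ T : H →L[ℂ] H, 0 ≤ ρ (star T * T)) (hone : ρ 1 = 1)
    (hmult : ∀ s t, ρ (U s * U t) = ρ (U s) * ρ (U t)) :
    ∀ t : ℝ, t ≠ 0 → ρ (W t) = 0 := by
  intro t ht
  let f := PositiveLinearMap.ofStarMulSelfNonneg ρ hpos
  have hε0 : ε ≠ 0 := by rcases hε with rfl | rfl <;> norm_num
  let s := Real.pi / (ε * t)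
  have hphase : Complex.exp (ε * s * t * Complex.I) = -1 := by
    have : ε * s * t = Real.pi := by simp only [s]; field_simp
    rw [← Complex.exp_pi_mul_I]
    exact_mod_cast congrArg (fun r : ℝ => Complex.exp (r * Complex.I)) this
  have hfU : ‖f (U s)‖ = 1 :=
    f.norm_apply_eq_one_of_apply_mul_star hone (hUu s) (by rw [hUstar]; exact hmult s (-s))
  refine f.apply_eq_zero_of_unitary_mul_eq_neg hone (hUu s) hfU ?_
  rw [hWeyl, hphase, neg_one_smul]

/-- Let U_s = e^{isA} and W_t = e^{itB} be the unitary groups of self-adjoint operators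
A, B satisfying the Weyl relation U_s W_t = e^{±ist} W_t U_s.  If ρ is a state of B(H)
that is dispersion-free (multiplicative) on the von Neumann algebra generated by A
(equivalently on the unitary group (U_s)), then ρ(W_t) = 0 for all t ≠ 0. -/
theorem stmt_16 {H : Type*} [NormedAddCommGroup H] [InnerProductSpace ℂ H] [CompleteSpace H]
    (U W : ℝ → (H →L[ℂ] H))
    (hUu : ∀ s, U s ∈ unitary (H →L[ℂ] H)) (hWu : ∀ t, W t ∈ unitary (H →L[ℂ] H))
    (hU0 : U 0 = 1) (hUadd : ∀ s t, U (s + t) = U s * U t)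
    (hUstar : ∀ s, star (U s) = U (-s))
    (ε : ℝ) (hε : ε = 1 ∨ ε = -1)
    (hWeyl : ∀ s t, U s * W t = Complex.exp (ε * s * t * Complex.I) • (W t * U s))
    (ρ : (H →L[ℂ] H) →ₗ[ℂ] ℂ)
    (hpos : ∀ T : H →L[ℂ] H, 0 ≤ ρ (star T * T)) (hone : ρ 1 = 1)
    (hmult : ∀ s t, ρ (U s * U t) = ρ (U s) * ρ (U t)) :
    ∀ t : ℝ, t ≠ 0 → ρ (W t) = 0 :=
  stmt_16_general U W hUu hUstar ε hε hWeyl ρ hpos hone hmult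
end
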